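/- arXiv:1401.6959 — 5 statements merged into one kernel-verified Lean document; each statement's English description precedes it below -/
import Mathlib

section
/- If two Gumbel distributions have the same median M and scale parameters a+ε and a−ε with 0 < ε < a/2, then their cumulative distribution functions differ pointwise by at most ε/a; that is, for all real x, |F₁(x) − F₂(x)| ≤ ε/a where Fᵢ(x) = 2^(−exp(−(x−M)/aᵢ)) with a₁ = a+ε, a₂ = a−ε. -/
/-!
Let `F(v) = 2^(-e^(-v))` be the Gumbel cdf with median 0 and scale 1, so the two cdfs are
`F((x - M) / b)` for `b = a ± ε`. As a function of `s = log b` the value `F(t e^(-s))` has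
derivative `-v F'(v)` at `v = t e^(-s)`, and `|v| F'(v) ≤ 1/3` for every real `v`. Hence the cdf
value is `1/3`-Lipschitz in the log-scale, and `log (a + ε) - log (a - ε) ≤ 3 ε / a`
when `ε < a / 2`.
-/

open Real

noncomputable def gumbelCdf (v : ℝ) : ℝ := 2 ^ (-exp (-v))

noncomputable def gumbelDensity (v : ℝ) : ℝ := log 2 * exp (-v) * gumbelCdf v

lemma gumbelCdf_eq_exp (v : ℝ) : gumbelCdf v = exp (-(log 2 * exp (-v))) := by
  rw [gumbelCdf, rpow_def_of_pos two_pos, mul_neg]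

lemma gumbelCdf_nonneg (v : ℝ) : 0 ≤ gumbelCdf v :=
  rpow_nonneg zero_le_two _

lemma gumbelCdf_le_one (v : ℝ) : gumbelCdf v ≤ 1 :=
  rpow_le_one_of_one_le_of_nonpos one_le_two (neg_nonpos.2 (exp_pos _).le)

lemma gumbelDensity_nonneg (v : ℝ) : 0 ≤ gumbelDensity v := by
  have := log_pos one_lt_two
  have := gumbelCdf_nonneg v
  unfold gumbelDensity
  positivity

lemma hasDerivAt_gumbelCdf (v : ℝ) : HasDerivAt gumbelCdf (gumbelDensity v) v := by
  have h := ((hasDerivAt_neg v).exp.neg).const_rpow two_pos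
  simp only [Pi.neg_apply] at h
  unfold gumbelDensity gumbelCdf
  convert h using 1
  ring

lemma log_le_div_exp_one {w : ℝ} (hw : 0 < w) : log w ≤ w / exp 1 := by
  have h := log_le_sub_one_of_pos (div_pos hw (exp_pos 1))
  rw [log_div hw.ne' (exp_pos 1).ne', log_exp] at h
  linarith

lemma sq_mul_exp_neg_mul_le {c z : ℝ} (hc : 0 < c) (hz : 0 ≤ z) :
    z ^ 2 * exp (-(c * z)) ≤ (2 / (c * exp 1)) ^ 2 := by
  have hnonneg : 0 ≤ c * z / 2 * exp (-(c * z / 2)) := by positivity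
  calc z ^ 2 * exp (-(c * z)) = (2 / c) ^ 2 * (c * z / 2 * exp (-(c * z / 2))) ^ 2 := by
        rw [mul_pow, ← exp_nat_mul]
        field_simp
        ring_nf
    _ ≤ (2 / c) ^ 2 * exp (-1) ^ 2 := by gcongr; exact mul_exp_neg_le_exp_neg_one _
    _ = (2 / (c * exp 1)) ^ 2 := by rw [exp_neg]; field_simp

lemma mul_gumbelDensity_le (v : ℝ) : v * gumbelDensity v ≤ log 2 * exp (-1) := by
  have := log_pos one_lt_two
  calc v * gumbelDensity v = log 2 * (v * exp (-v)) * gumbelCdf v := by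
        unfold gumbelDensity; ring
    _ ≤ log 2 * exp (-1) * 1 := by
        gcongr
        exacts [gumbelCdf_nonneg v, mul_exp_neg_le_exp_neg_one v, gumbelCdf_le_one v]
    _ = log 2 * exp (-1) := mul_one _

/-- With `z = e^(-v)` we have `-v = log z ≤ z / e`, and `z² 2^(-z)` peaks at
`z = 2 / log 2`. -/
lemma neg_mul_gumbelDensity_le (v : ℝ) :
    -v * gumbelDensity v ≤ 4 / (log 2 * exp 1 ^ 3) := by
  have hlog2 := log_pos one_lt_two
  set z := exp (-v) with hz
  have hz0 : 0 < z := exp_pos _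
  have hv_eq : -v = log z := by rw [hz, log_exp]
  calc -v * gumbelDensity v = log 2 * (z * log z) * exp (-(log 2 * z)) := by
        rw [gumbelDensity, gumbelCdf_eq_exp, ← hz, hv_eq]; ring
    _ ≤ log 2 * (z * (z / exp 1)) * exp (-(log 2 * z)) := by
        gcongr
        exact log_le_div_exp_one hz0
    _ = log 2 / exp 1 * (z ^ 2 * exp (-(log 2 * z))) := by ring
    _ ≤ log 2 / exp 1 * (2 / (log 2 * exp 1)) ^ 2 := by
        gcongr; exact sq_mul_exp_neg_mul_le hlog2 hz0.le
    _ = 4 / (log 2 * exp 1 ^ 3) := by field_simp; ring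

lemma abs_mul_gumbelDensity_le (v : ℝ) : |v| * gumbelDensity v ≤ 1 / 3 := by
  have hlog2_lo := log_two_gt_d9
  have hlog2_hi := log_two_lt_d9
  rcases abs_choice v with hv | hv <;> rw [hv]
  · have := exp_neg_one_lt_d9
    nlinarith [mul_gumbelDensity_le v]
  · have he : (2.7182818283 : ℝ) ^ 3 ≤ exp 1 ^ 3 := by gcongr; exact exp_one_gt_d9.le
    refine (neg_mul_gumbelDensity_le v).trans ?_
    rw [div_le_div_iff₀ (by positivity) (by norm_num)]
    nlinarith

lemma abs_gumbelCdf_div_sub_le (t : ℝ) {b c : ℝ} (hb : 0 < b) (hc : 0 < c) :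
    |gumbelCdf (t / b) - gumbelCdf (t / c)| ≤ |log b - log c| / 3 := by
  let g : ℝ → ℝ := fun s ↦ gumbelCdf (t * exp (-s))
  let g' : ℝ → ℝ := fun s ↦ -(t * exp (-s)) * gumbelDensity (t * exp (-s))
  have hg : ∀ s, HasDerivAt g (g' s) s := fun s ↦
    ((hasDerivAt_gumbelCdf _).comp s ((hasDerivAt_neg s).exp.const_mul t)).congr_deriv
      (by ring)
  have hg' : ∀ s, ‖g' s‖ ≤ 1 / 3 := fun s ↦ by
    rw [norm_mul, norm_neg, Real.norm_eq_abs, Real.norm_of_nonneg (gumbelDensity_nonneg _)]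
    exact abs_mul_gumbelDensity_le _
  have hlip := convex_univ.norm_image_sub_le_of_norm_hasDerivWithin_le
    (fun s _ ↦ (hg s).hasDerivWithinAt) (fun s _ ↦ hg' s)
    (Set.mem_univ (log c)) (Set.mem_univ (log b))
  have hg_log : ∀ {r : ℝ}, 0 < r → g (log r) = gumbelCdf (t / r) := fun hr ↦ by
    simp only [g, exp_neg, exp_log hr, div_eq_mul_inv]
  rw [hg_log hb, hg_log hc, Real.norm_eq_abs, Real.norm_eq_abs] at hlip
  linarith

lemma log_sub_log_le_sub_div {x y : ℝ} (hx : 0 < x) (hy : 0 < y) :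
    log y - log x ≤ (y - x) / x := by
  have h := log_le_sub_one_of_pos (div_pos hy hx)
  rw [log_div hy.ne' hx.ne'] at h
  rwa [sub_div, div_self hx.ne']

lemma log_add_sub_log_sub_le {a ε : ℝ} (hε : 0 < ε) (hεa : ε < a / 2) :
    log (a + ε) - log (a - ε) ≤ 3 * (ε / a) := by
  have ha : 0 < a := by linarith
  have hup := log_sub_log_le_sub_div ha (by linarith : 0 < a + ε)
  have hdown := log_sub_log_le_sub_div (by linarith : 0 < a - ε) ha
  have hdown' : (a - (a - ε)) / (a - ε) ≤ 2 * (ε / a) := by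
    rw [div_le_iff₀ (by linarith)]
    field_simp
    nlinarith
  rw [add_sub_cancel_left] at hup
  linarith

/-- Lemma of Common Median: two Gumbel distributions with common median `M`
and scales `a+ε`, `a−ε` (with `0 < ε < a/2`) have cdfs differing by at most `ε/a`. -/
theorem gumbel_common_median (a ε M : ℝ) (hε : 0 < ε) (hεa : ε < a / 2) :
    ∀ x : ℝ,
      |(2 : ℝ) ^ (-Real.exp (-(x - M) / (a + ε))) -
        (2 : ℝ) ^ (-Real.exp (-(x - M) / (a - ε)))| ≤ ε / a := by
  intro x
  have hlog : 0 ≤ log (a + ε) - log (a - ε) :=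
    sub_nonneg.2 (log_le_log (by linarith) (by linarith))
  calc _ = |gumbelCdf ((x - M) / (a + ε)) - gumbelCdf ((x - M) / (a - ε))| := by
        simp only [gumbelCdf, neg_div]
    _ ≤ |log (a + ε) - log (a - ε)| / 3 :=
        abs_gumbelCdf_div_sub_le _ (by linarith) (by linarith)
    _ ≤ ε / a := by
        rw [abs_of_nonneg hlog]
        linarith [log_add_sub_log_sub_le hε hεa]
end

section
/- The survival function of the Gumbel distribution, 1 − F(x) = 1 − exp(−exp(−(x−μ)/a)) with a > 0, is log-concave on ℝ. -/
/-!
In the variable `u = -(x - μ)/a` the log-survival function is `log (1 - exp (-exp u))`, whose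
derivative is `s / (exp s - 1)` with `s = exp u`. This decreases in `s` because the secant slope
`(exp s - 1) / s` of the convex function `exp` increases, so the function is concave in `u`;
precomposing with the affine map `x ↦ -(x - μ)/a` preserves concavity.
-/

open Real Set

theorem antitoneOn_div_exp_sub_one : AntitoneOn (fun s : ℝ => s / (exp s - 1)) (Ioi 0) := by
  intro p hp q hq hpq
  have hslope : (exp p - exp 0) / (p - 0) ≤ (exp q - exp 0) / (q - 0) :=
    convexOn_exp.secant_mono (mem_univ 0) (mem_univ p) (mem_univ q) hp.ne' hq.ne' hpq
  simp only [exp_zero, sub_zero] at hslope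
  have hslope_pos : 0 < (exp p - 1) / p := div_pos (by simpa using hp) hp
  simpa only [inv_div] using inv_anti₀ hslope_pos hslope

theorem hasDerivAt_log_one_sub_exp_neg_exp (u : ℝ) :
    HasDerivAt (fun u => log (1 - exp (-exp u))) (exp u / (exp (exp u) - 1)) u := by
  have hlt : exp (-exp u) < 1 := exp_lt_one_iff.2 (neg_lt_zero.2 (exp_pos u))
  have hexp : 1 < exp (exp u) := one_lt_exp_iff.2 (exp_pos u)
  refine (((hasDerivAt_exp u).neg.exp.const_sub 1).log (sub_pos.2 hlt).ne').congr_deriv ?_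
  simp only [Pi.neg_apply, exp_neg]
  field_simp

theorem concaveOn_log_one_sub_exp_neg_exp :
    ConcaveOn ℝ univ (fun u => log (1 - exp (-exp u))) := by
  have hderiv : deriv (fun u => log (1 - exp (-exp u))) = fun u => exp u / (exp (exp u) - 1) :=
    funext fun u => (hasDerivAt_log_one_sub_exp_neg_exp u).deriv
  refine Antitone.concaveOn_univ_of_deriv
    (fun u => (hasDerivAt_log_one_sub_exp_neg_exp u).differentiableAt) ?_
  rw [hderiv]
  intro u v huv
  exact antitoneOn_div_exp_sub_one (exp_pos u) (exp_pos v) (exp_le_exp.2 huv)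

theorem gumbel_survival_logConcave_general (a μ : ℝ) :
    ConcaveOn ℝ Set.univ
      (fun x : ℝ => Real.log (1 - Real.exp (-Real.exp (-(x - μ) / a)))) := by
  refine (concaveOn_log_one_sub_exp_neg_exp.comp_affineMap
    (AffineMap.lineMap (μ / a) ((μ - 1) / a))).congr fun x _ => ?_
  simp only [Function.comp_apply, AffineMap.lineMap_apply_module']
  ring_nf

/-- The Gumbel survival function `1 − F(x) = 1 − exp(−exp(−(x−μ)/a))` is log-concave on ℝ. -/
theorem gumbel_survival_logConcave (a μ : ℝ) (ha : 0 < a) :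
    ConcaveOn ℝ Set.univ
      (fun x : ℝ => Real.log (1 - Real.exp (-Real.exp (-(x - μ) / a)))) :=
  gumbel_survival_logConcave_general a μ
end

section
/- If a probability density f : ℝ → (0,∞) is log-concave, then its cumulative distribution function F(x) = ∫_{−∞}^{x} f(t) dt is log-concave wherever it is positive. -/
open MeasureTheory Set

/-!
Since `(log F)' = f / F`, it suffices that `f / F` is antitone. Log-concavity of `f` makes
`f (t + h) / f t` antitone in `t` for `h ≥ 0`, so `f (x + h) * f t ≤ f x * f (t + h)` for `t ≤ x`;
integrating over `t ≤ x` gives `f (x + h) * F x ≤ f x * F (x + h)`.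
-/

theorem ConcaveOn.antitone_map_add_sub {g : ℝ → ℝ} (hg : ConcaveOn ℝ univ g) {h : ℝ}
    (hh : 0 ≤ h) : Antitone fun x => g (x + h) - g x := by
  intro s t hst
  rcases (show (0 : ℝ) ≤ t + h - s by linarith).eq_or_lt with hL | hL
  · obtain rfl : s = t := by linarith
    rfl
  -- `t` and `s + h` are the two convex combinations of `s` and `t + h` with weights `a`, `b`.
  set a := h / (t + h - s)
  set b := (t - s) / (t + h - s)
  have ha : 0 ≤ a := div_nonneg hh hL.le
  have hb : 0 ≤ b := div_nonneg (by linarith) hL.le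
  have hab : a + b = 1 := by simp only [a, b]; field_simp; ring
  have hgt := hg.2 (mem_univ s) (mem_univ (t + h)) ha hb hab
  have hgsh := hg.2 (mem_univ s) (mem_univ (t + h)) hb ha (by linarith)
  have ht : a • s + b • (t + h) = t := by simp only [smul_eq_mul, a, b]; field_simp; ring
  have hsh : b • s + a • (t + h) = s + h := by simp only [smul_eq_mul, a, b]; field_simp; ring
  rw [ht] at hgt
  rw [hsh] at hgsh
  simp only [smul_eq_mul] at hgt hgsh
  show g (t + h) - g t ≤ g (s + h) - g s
  have hsum : g (t + h) + g s = (a + b) * g s + (a + b) * g (t + h) := by rw [hab]; ring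
  linarith

theorem antitone_map_add_div_of_concaveOn_log {f : ℝ → ℝ} (hpos : ∀ x, 0 < f x)
    (hlc : ConcaveOn ℝ univ fun x => Real.log (f x)) {h : ℝ} (hh : 0 ≤ h) :
    Antitone fun x => f (x + h) / f x := by
  intro s t hst
  have := hlc.antitone_map_add_sub hh hst
  simp only [← Real.log_div (hpos _).ne' (hpos _).ne'] at this
  exact (Real.log_le_log_iff (div_pos (hpos _) (hpos _)) (div_pos (hpos _) (hpos _))).1 this

theorem setIntegral_Iic_comp_add_right {E : Type*} [NormedAddCommGroup E] [NormedSpace ℝ E]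
    (f : ℝ → E) (x c : ℝ) : ∫ t in Iic x, f (t + c) = ∫ t in Iic (x + c), f t := by
  have := (measurePreserving_add_right volume c).setIntegral_preimage_emb
    (measurableEmbedding_addRight c) f (Iic (x + c))
  rwa [preimage_add_const_Iic, add_sub_cancel_right] at this

theorem integral_Iic_pos {f : ℝ → ℝ} (hpos : ∀ x, 0 < f x) (hint : Integrable f) (x : ℝ) :
    0 < ∫ t in Iic x, f t := by
  have hsplit := intervalIntegral.integral_Iic_sub_Iic (μ := volume) (a := x - 1) (b := x)
    hint.integrableOn hint.integrableOn
  have hlast : 0 < ∫ t in (x - 1)..x, f t :=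
    intervalIntegral.intervalIntegral_pos_of_pos hint.intervalIntegrable hpos (by linarith)
  have hfirst : 0 ≤ ∫ t in Iic (x - 1), f t :=
    setIntegral_nonneg measurableSet_Iic fun t _ => (hpos t).le
  linarith

theorem hasDerivAt_integral_Iic {E : Type*} [NormedAddCommGroup E] [NormedSpace ℝ E]
    [CompleteSpace E] {f : ℝ → E} (hcont : Continuous f) (hint : Integrable f) (x : ℝ) :
    HasDerivAt (fun y => ∫ t in Iic y, f t) (f x) x := by
  have hsplit : (fun y => ∫ t in Iic y, f t) =
      fun y => (∫ t in Iic 0, f t) + ∫ t in 0..y, f t := by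
    funext y
    rw [← intervalIntegral.integral_Iic_sub_Iic hint.integrableOn hint.integrableOn,
      add_sub_cancel]
  rw [hsplit]
  exact (intervalIntegral.integral_hasDerivAt_right hint.intervalIntegrable
    hcont.stronglyMeasurable.stronglyMeasurableAtFilter hcont.continuousAt).const_add _

theorem antitone_div_integral_Iic_of_concaveOn_log {f : ℝ → ℝ} (hpos : ∀ x, 0 < f x)
    (hint : Integrable f) (hlc : ConcaveOn ℝ univ fun x => Real.log (f x)) :
    Antitone fun x => f x / ∫ t in Iic x, f t := by
  intro x y hxy
  rw [div_le_div_iff₀ (integral_Iic_pos hpos hint y) (integral_Iic_pos hpos hint x)]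
  obtain ⟨h, hh, rfl⟩ : ∃ h, 0 ≤ h ∧ y = x + h := ⟨y - x, by linarith, by ring⟩
  have hratio : ∀ t ≤ x, f (x + h) * f t ≤ f x * f (t + h) := fun t ht => by
    have := antitone_map_add_div_of_concaveOn_log hpos hlc hh ht
    rwa [div_le_div_iff₀ (hpos x) (hpos t), mul_comm (f (t + h))] at this
  calc f (x + h) * ∫ t in Iic x, f t
      = ∫ t in Iic x, f (x + h) * f t := (integral_const_mul _ _).symm
    _ ≤ ∫ t in Iic x, f x * f (t + h) :=
        setIntegral_mono_on (hint.const_mul _).integrableOn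
          ((hint.comp_add_right h).const_mul _).integrableOn measurableSet_Iic hratio
    _ = f x * ∫ t in Iic (x + h), f t := by
        rw [integral_const_mul, setIntegral_Iic_comp_add_right]

theorem cdf_logConcave_of_pdf_logConcave_general (f : ℝ → ℝ)
    (hcont : Continuous f) (hpos : ∀ x, 0 < f x)
    (hint : Integrable f)
    (hlc : ConcaveOn ℝ Set.univ fun x => Real.log (f x)) :
    ConcaveOn ℝ Set.univ fun x => Real.log (∫ t in Set.Iic x, f t) := by
  have hderiv : ∀ x, HasDerivAt (fun y => Real.log (∫ t in Iic y, f t))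
      (f x / ∫ t in Iic x, f t) x := fun x =>
    (hasDerivAt_integral_Iic hcont hint x).log (integral_Iic_pos hpos hint x).ne'
  refine Antitone.concaveOn_univ_of_deriv (fun x => (hderiv x).differentiableAt) ?_
  rw [funext fun x => (hderiv x).deriv]
  exact antitone_div_integral_Iic_of_concaveOn_log hpos hint hlc

/-- If a continuous positive integrable probability density `f` is log-concave,
then its cdf `F(x) = ∫_{−∞}^x f` is log-concave (it is positive everywhere). -/
theorem cdf_logConcave_of_pdf_logConcave (f : ℝ → ℝ)
    (hcont : Continuous f) (hpos : ∀ x, 0 < f x)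
    (hint : Integrable f) (hone : ∫ t, f t = 1)
    (hlc : ConcaveOn ℝ Set.univ fun x => Real.log (f x)) :
    ConcaveOn ℝ Set.univ fun x => Real.log (∫ t in Set.Iic x, f t) :=
  cdf_logConcave_of_pdf_logConcave_general f hcont hpos hint hlc
end

section
/- If a probability density f : ℝ → (0,∞) is log-concave, then the survival function 1 − F(x) = ∫_{x}^{∞} f(t) dt is log-concave wherever it is positive. -/
/-! For `x ≤ y ≤ t`, log-concavity of `f` gives `f x * f t ≤ f y * f (t + (x - y))`; integrating
over `t > y` shows that the hazard rate `f / S`, where `S x = ∫_x^∞ f`, is nondecreasing. Since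
`S' = -f`, the derivative `-f / S` of `log S` is nonincreasing, so `log S` is concave. -/

open MeasureTheory Set

theorem ConcaveOn.add_le_add_of_add_eq {𝕜 : Type*} [Field 𝕜] [LinearOrder 𝕜]
    [IsStrictOrderedRing 𝕜] {s : Set 𝕜} {φ : 𝕜 → 𝕜} (hφ : ConcaveOn 𝕜 s φ)
    {a b c d : 𝕜} (ha : a ∈ s) (hd : d ∈ s) (hab : a ≤ b) (hbd : b ≤ d) (hsum : a + d = b + c) :
    φ a + φ d ≤ φ b + φ c := by
  obtain rfl : c = a + d - b := by linarith
  rcases (hab.trans hbd).eq_or_lt with rfl | had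
  · obtain rfl : b = a := le_antisymm hbd hab
    simp
  -- `b` and `c` are the convex combinations of `a` and `d` with swapped weights.
  set μ := (d - b) / (d - a)
  have hda : 0 < d - a := by linarith
  have hμ₀ : 0 ≤ μ := div_nonneg (by linarith) hda.le
  have hμ₁ : 0 ≤ 1 - μ := sub_nonneg.2 <| (div_le_one hda).2 (by linarith)
  have hb : μ • a + (1 - μ) • d = b := by
    simp only [smul_eq_mul, μ]; field_simp; ring
  have hc : (1 - μ) • a + μ • d = a + d - b := by
    simp only [smul_eq_mul, μ]; field_simp; ring
  have h₁ := hφ.2 ha hd hμ₀ hμ₁ (by ring)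
  have h₂ := hφ.2 ha hd hμ₁ hμ₀ (by ring)
  rw [hb] at h₁
  rw [hc] at h₂
  simp only [smul_eq_mul] at h₁ h₂
  linarith

theorem mul_le_mul_of_concaveOn_log {s : Set ℝ} {f : ℝ → ℝ} (hpos : ∀ x ∈ s, 0 < f x)
    (hlc : ConcaveOn ℝ s fun x => Real.log (f x)) {a b c d : ℝ} (ha : a ∈ s) (hd : d ∈ s)
    (hab : a ≤ b) (hbd : b ≤ d) (hsum : a + d = b + c) : f a * f d ≤ f b * f c := by
  have hb : b ∈ s := hlc.1.ordConnected.out ha hd ⟨hab, hbd⟩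
  have hc : c ∈ s := hlc.1.ordConnected.out ha hd ⟨by linarith, by linarith⟩
  rw [← Real.log_le_log_iff (mul_pos (hpos a ha) (hpos d hd)) (mul_pos (hpos b hb) (hpos c hc)),
    Real.log_mul (hpos a ha).ne' (hpos d hd).ne', Real.log_mul (hpos b hb).ne' (hpos c hc).ne']
  exact hlc.add_le_add_of_add_eq ha hd hab hbd hsum

theorem concaveOn_univ_log_of_antitone {G G' : ℝ → ℝ} (hG : ∀ x, HasDerivAt G (G' x) x)
    (hpos : ∀ x, 0 < G x) (hanti : Antitone fun x => G' x / G x) :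
    ConcaveOn ℝ univ fun x => Real.log (G x) := by
  have hlog x : HasDerivAt (fun y => Real.log (G y)) (G' x / G x) x := (hG x).log (hpos x).ne'
  refine Antitone.concaveOn_univ_of_deriv (fun x => (hlog x).differentiableAt) ?_
  have hderiv : deriv (fun y => Real.log (G y)) = fun x => G' x / G x :=
    funext fun x => (hlog x).deriv
  rwa [hderiv]

theorem setIntegral_Ioi_comp_add_right {E : Type*} [NormedAddCommGroup E] [NormedSpace ℝ E]
    (f : ℝ → E) (x c : ℝ) : ∫ t in Ioi x, f (t + c) = ∫ t in Ioi (x + c), f t := by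
  have hpre : (· + c) ⁻¹' Ioi (x + c) = Ioi x := by simp
  rw [← hpre]
  exact (measurePreserving_add_right volume c).setIntegral_preimage_emb
    (MeasurableEquiv.addRight c).measurableEmbedding f _

theorem integral_Ioi_pos {f : ℝ → ℝ} {x : ℝ} (hf : IntegrableOn f (Ioi x))
    (hpos : ∀ t ∈ Ioi x, 0 < f t) : 0 < ∫ t in Ioi x, f t := by
  rw [setIntegral_pos_iff_support_of_nonneg_ae
    ((ae_restrict_iff' measurableSet_Ioi).2 <| .of_forall fun t ht => (hpos t ht).le) hf]
  have : Function.support f ∩ Ioi x = Ioi x :=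
    inter_eq_right.2 fun t ht => (hpos t ht).ne'
  simp [this]

theorem hasDerivAt_integral_Ioi {E : Type*} [NormedAddCommGroup E] [NormedSpace ℝ E]
    [CompleteSpace E] {f : ℝ → E} (hf : Integrable f) {x : ℝ} (hfx : ContinuousAt f x) :
    HasDerivAt (fun y => ∫ t in Ioi y, f t) (-f x) x := by
  have hsplit :
      (fun y => ∫ t in Ioi y, f t) = fun y => (∫ t in Ioi 0, f t) - ∫ t in 0..y, f t := by
    ext y
    rw [← intervalIntegral.integral_Ioi_sub_Ioi' hf.integrableOn hf.integrableOn, sub_sub_cancel]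
  rw [hsplit, ← zero_sub]
  exact (hasDerivAt_const x _).sub <| intervalIntegral.integral_hasDerivAt_right
    hf.intervalIntegrable hf.aestronglyMeasurable.stronglyMeasurableAtFilter hfx

theorem mul_integral_Ioi_le_of_concaveOn_log {f : ℝ → ℝ} (hf : Integrable f)
    (hpos : ∀ x, 0 < f x) (hlc : ConcaveOn ℝ univ fun x => Real.log (f x)) {x y : ℝ} (hxy : x ≤ y) :
    f x * ∫ t in Ioi y, f t ≤ f y * ∫ t in Ioi x, f t := by
  have hpt : ∀ t ∈ Ioi y, f x * f t ≤ f y * f (t + (x - y)) := fun t ht =>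
    mul_le_mul_of_concaveOn_log (fun z _ => hpos z) hlc (mem_univ x) (mem_univ t) hxy
      (le_of_lt ht) (by ring)
  calc f x * ∫ t in Ioi y, f t = ∫ t in Ioi y, f x * f t := (integral_const_mul _ _).symm
    _ ≤ ∫ t in Ioi y, f y * f (t + (x - y)) :=
      setIntegral_mono_on (hf.integrableOn.const_mul _)
        ((hf.comp_add_right _).integrableOn.const_mul _) measurableSet_Ioi hpt
    _ = f y * ∫ t in Ioi x, f t := by
      rw [integral_const_mul, setIntegral_Ioi_comp_add_right, add_sub_cancel]

theorem monotone_div_integral_Ioi_of_concaveOn_log {f : ℝ → ℝ} (hf : Integrable f)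
    (hpos : ∀ x, 0 < f x) (hlc : ConcaveOn ℝ univ fun x => Real.log (f x)) :
    Monotone fun x => f x / ∫ t in Ioi x, f t := by
  intro x y hxy
  rw [div_le_div_iff₀ (integral_Ioi_pos hf.integrableOn fun t _ => hpos t)
    (integral_Ioi_pos hf.integrableOn fun t _ => hpos t)]
  exact mul_integral_Ioi_le_of_concaveOn_log hf hpos hlc hxy

theorem survival_logConcave_of_pdf_logConcave_general (f : ℝ → ℝ)
    (hcont : Continuous f) (hpos : ∀ x, 0 < f x)
    (hint : Integrable f)
    (hlc : ConcaveOn ℝ Set.univ fun x => Real.log (f x)) :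
    ConcaveOn ℝ Set.univ fun x => Real.log (∫ t in Set.Ioi x, f t) := by
  refine concaveOn_univ_log_of_antitone (fun x => hasDerivAt_integral_Ioi hint hcont.continuousAt)
    (fun x => integral_Ioi_pos hint.integrableOn fun t _ => hpos t) ?_
  simpa only [neg_div] using (monotone_div_integral_Ioi_of_concaveOn_log hint hpos hlc).neg

/-- If a continuous positive integrable probability density `f` is log-concave,
then its survival function `1 − F(x) = ∫_x^∞ f` is log-concave (it is positive everywhere). -/
theorem survival_logConcave_of_pdf_logConcave (f : ℝ → ℝ)
    (hcont : Continuous f) (hpos : ∀ x, 0 < f x)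
    (hint : Integrable f) (hone : ∫ t, f t = 1)
    (hlc : ConcaveOn ℝ Set.univ fun x => Real.log (f x)) :
    ConcaveOn ℝ Set.univ fun x => Real.log (∫ t in Set.Ioi x, f t) :=
  survival_logConcave_of_pdf_logConcave_general f hcont hpos hint hlc
end

section
/- Let ℓ : [1,∞) → (0,∞) be a continuous, slowly varying, monotonically decreasing function with ℓ(t) → 0 and ∫_1^∞ ℓ(t) dt = ∞. Then for every fixed λ > 1, Σ_{n < k ≤ λn} ℓ(k) → ∞ as n → ∞. -/
/-!
Slow variation gives `ℓ (l t) ≥ δ ℓ t` eventually for some `δ` with `l δ > 1`; iterating along the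
geometric sequence `lᵐ T` and using monotonicity in between shows that `t ℓ(t)` grows at least
like `(l δ)ᵐ` on `[lᵐ T, ∞)`, hence `t ℓ(t) → ∞`. The sum over `n < k ≤ ⌊l n⌋` has about
`(l - 1) n` terms, each at least `ℓ(l n)`, so it is at least `(1 - l⁻¹) (l n) ℓ(l n) - ℓ(1)`.
-/

open Filter Set Topology

namespace SlowlyVarying

variable {ℓ : ℝ → ℝ} {l δ T : ℝ}

lemma pow_mul_le_apply_pow_mul (hl : 1 ≤ l) (hδ : 0 ≤ δ) (hT : 0 ≤ T)
    (hstep : ∀ t ≥ T, δ * ℓ t ≤ ℓ (l * t)) (m : ℕ) {t : ℝ} (ht : T ≤ t) :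
    δ ^ m * ℓ t ≤ ℓ (l ^ m * t) := by
  induction m with
  | zero => simp
  | succ m ih =>
    have hT' : T ≤ l ^ m * t := ht.trans (le_mul_of_one_le_left (hT.trans ht) (one_le_pow₀ hl))
    calc δ ^ (m + 1) * ℓ t = δ * (δ ^ m * ℓ t) := by ring
      _ ≤ δ * ℓ (l ^ m * t) := mul_le_mul_of_nonneg_left ih hδ
      _ ≤ ℓ (l * (l ^ m * t)) := hstep _ hT'
      _ = ℓ (l ^ (m + 1) * t) := by rw [pow_succ]; ring_nf

lemma geom_le_mul_apply (hl : 1 < l) (hδ : 0 ≤ δ) (hlδ : 1 ≤ l * δ) (hT : 0 < T)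
    (hanti : AntitoneOn ℓ (Ici T)) (hℓT : 0 ≤ ℓ T) (hstep : ∀ t ≥ T, δ * ℓ t ≤ ℓ (l * t))
    {m : ℕ} {t : ℝ} (ht : l ^ m * T ≤ t) :
    (l * δ) ^ m * (δ * T * ℓ T) ≤ t * ℓ t := by
  have hTt : T ≤ t := (le_mul_of_one_le_left hT.le (one_le_pow₀ hl.le)).trans ht
  obtain ⟨k, hk_le, hk_lt⟩ := exists_nat_pow_near ((one_le_div hT).2 hTt) hl
  rw [le_div_iff₀ hT] at hk_le
  rw [div_lt_iff₀ hT] at hk_lt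
  have hmk : m ≤ k := by
    have : l ^ m < l ^ (k + 1) := lt_of_mul_lt_mul_right (ht.trans_lt hk_lt) hT.le
    exact Nat.lt_succ_iff.1 ((pow_lt_pow_iff_right₀ hl).1 this)
  have hTk : T ≤ l ^ (k + 1) * T := le_mul_of_one_le_left hT.le (one_le_pow₀ hl.le)
  calc (l * δ) ^ m * (δ * T * ℓ T) ≤ (l * δ) ^ k * (δ * T * ℓ T) := by
        gcongr
    _ = l ^ k * T * (δ ^ (k + 1) * ℓ T) := by ring
    _ ≤ t * ℓ (l ^ (k + 1) * T) := by
        gcongr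
        · exact hT.le.trans hTt
        · exact pow_mul_le_apply_pow_mul hl.le hδ hT.le hstep (k + 1) le_rfl
    _ ≤ t * ℓ t := by
        gcongr
        · exact hT.le.trans hTt
        · exact hanti (mem_Ici.2 hTt) (mem_Ici.2 hTk) hk_lt.le

theorem tendsto_id_mul_atTop (hl : 1 < l) (hpos : ∀ t ≥ (1 : ℝ), 0 < ℓ t)
    (hanti : AntitoneOn ℓ (Ici 1)) (hslow : Tendsto (fun t => ℓ (l * t) / ℓ t) atTop (𝓝 1)) :
    Tendsto (fun t => t * ℓ t) atTop atTop := by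
  set δ : ℝ := (1 + l⁻¹) / 2
  have hδ : 0 < δ := by positivity
  have hδ1 : δ < 1 := by have := inv_lt_one_of_one_lt₀ hl; simp only [δ]; linarith
  have hlδ : l * δ = (l + 1) / 2 := by
    simp only [δ]; field_simp
  obtain ⟨T₀, hT₀⟩ := eventually_atTop.1 (hslow.eventually (eventually_ge_nhds hδ1))
  set T := max T₀ 1
  have hT1 : 1 ≤ T := le_max_right _ _
  have hstep : ∀ t ≥ T, δ * ℓ t ≤ ℓ (l * t) := fun t ht =>
    (le_div_iff₀ (hpos t (hT1.trans ht))).1 (hT₀ t ((le_max_left _ _).trans ht))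
  have hC : 0 < δ * T * ℓ T := by have := hpos T hT1; positivity
  have hgeom : Tendsto (fun m : ℕ => (l * δ) ^ m * (δ * T * ℓ T)) atTop atTop :=
    (tendsto_pow_atTop_atTop_of_one_lt (by linarith)).atTop_mul_const hC
  refine tendsto_atTop.2 fun M => ?_
  obtain ⟨m, hm⟩ := (tendsto_atTop.1 hgeom M).exists
  filter_upwards [eventually_ge_atTop (l ^ m * T)] with t ht
  exact hm.trans <| geom_le_mul_apply hl hδ.le (by linarith) (by linarith)
    (hanti.mono (Ici_subset_Ici.2 hT1)) (hpos T hT1).le hstep ht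

lemma mul_le_sum_Ioc_floor (hnonneg : ∀ t ≥ (1 : ℝ), 0 ≤ ℓ t) (hanti : AntitoneOn ℓ (Ici 1))
    (hl : 1 ≤ l) {n : ℕ} (hn : 1 ≤ n) :
    (l * n - n - 1) * ℓ (l * n) ≤ ∑ k ∈ Finset.Ioc n ⌊l * n⌋₊, ℓ k := by
  have hn1 : (1 : ℝ) ≤ n := by exact_mod_cast hn
  have hnl : (n : ℝ) ≤ l * n := le_mul_of_one_le_left (by positivity) hl
  have hfloor : n ≤ ⌊l * n⌋₊ := Nat.le_floor hnl
  have hcard : l * n - n - 1 ≤ (Finset.Ioc n ⌊l * n⌋₊).card := by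
    rw [Nat.card_Ioc, Nat.cast_sub hfloor]
    linarith [Nat.sub_one_lt_floor (l * n)]
  have hterm : ∀ k ∈ Finset.Ioc n ⌊l * n⌋₊, ℓ (l * n) ≤ ℓ k := by
    intro k hk
    obtain ⟨hnk, hkf⟩ := Finset.mem_Ioc.1 hk
    have hk1 : (1 : ℝ) ≤ k := by exact_mod_cast hn.trans hnk.le
    exact hanti hk1 (hn1.trans hnl) ((Nat.cast_le.2 hkf).trans (Nat.floor_le (by linarith)))
  calc (l * n - n - 1) * ℓ (l * n) ≤ (Finset.Ioc n ⌊l * n⌋₊).card * ℓ (l * n) :=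
        mul_le_mul_of_nonneg_right hcard (hnonneg _ (hn1.trans hnl))
    _ ≤ ∑ k ∈ Finset.Ioc n ⌊l * n⌋₊, ℓ k := by
        simpa [nsmul_eq_mul] using Finset.card_nsmul_le_sum _ _ _ hterm

end SlowlyVarying

open SlowlyVarying

theorem sum_between_n_and_lambda_n_tendsto_atTop_general (ℓ : ℝ → ℝ)
    (hpos : ∀ t ≥ (1 : ℝ), 0 < ℓ t)
    (hanti : AntitoneOn ℓ (Set.Ici 1))
    (hslow : ∀ l : ℝ, 0 < l → Tendsto (fun t => ℓ (l * t) / ℓ t) atTop (nhds 1)) :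
    ∀ l : ℝ, 1 < l →
      Tendsto (fun n : ℕ => ∑ k ∈ Finset.Ioc n (Nat.floor (l * n)), ℓ k) atTop atTop := by
  intro l hl
  have hg := tendsto_id_mul_atTop hl hpos hanti (hslow l (by linarith))
  have hln : Tendsto (fun n : ℕ => l * n) atTop atTop :=
    tendsto_natCast_atTop_atTop.const_mul_atTop (by linarith)
  have hlower : Tendsto (fun n : ℕ => (1 - l⁻¹) * (l * n * ℓ (l * n)) - ℓ 1) atTop atTop :=
    tendsto_atTop_add_const_right _ _
      ((hg.comp hln).const_mul_atTop (by linarith [inv_lt_one_of_one_lt₀ hl]))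
  refine tendsto_atTop_mono' _ ?_ hlower
  filter_upwards [eventually_ge_atTop 1] with n hn
  have hn1 : (1 : ℝ) ≤ n := by exact_mod_cast hn
  have hln1 : 1 ≤ l * n := by nlinarith
  have hℓ : ℓ (l * n) ≤ ℓ 1 := hanti (mem_Ici.2 le_rfl) hln1 hln1
  have hexpand : (1 - l⁻¹) * (l * n * ℓ (l * n)) = (l * n - n) * ℓ (l * n) := by
    field_simp
  calc (1 - l⁻¹) * (l * n * ℓ (l * n)) - ℓ 1 ≤ (l * n - n - 1) * ℓ (l * n) := by
        linarith
    _ ≤ _ := mul_le_sum_Ioc_floor (fun t ht => (hpos t ht).le) hanti hl.le hn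

/-- Lemma 2: if `ℓ` is continuous, slowly varying, decreasing, positive on `[1,∞)`
with `ℓ(t) → 0` and divergent integral, then for every fixed `l > 1` the sums
`∑_{n < k ≤ ⌊l·n⌋} ℓ(k)` tend to infinity. -/
theorem sum_between_n_and_lambda_n_tendsto_atTop (ℓ : ℝ → ℝ)
    (hcont : ContinuousOn ℓ (Set.Ici 1))
    (hpos : ∀ t ≥ (1 : ℝ), 0 < ℓ t)
    (hanti : AntitoneOn ℓ (Set.Ici 1))
    (hslow : ∀ l : ℝ, 0 < l → Tendsto (fun t => ℓ (l * t) / ℓ t) atTop (nhds 1))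
    (hzero : Tendsto ℓ atTop (nhds 0))
    (hdiv : Tendsto (fun x : ℝ => ∫ t in (1 : ℝ)..x, ℓ t) atTop atTop) :
    ∀ l : ℝ, 1 < l →
      Tendsto (fun n : ℕ => ∑ k ∈ Finset.Ioc n (Nat.floor (l * n)), ℓ k) atTop atTop :=
  sum_between_n_and_lambda_n_tendsto_atTop_general ℓ hpos hanti hslow
end
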